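/- arXiv:1301.5666 — 9 statements merged into one kernel-verified Lean document; each statement's English description precedes it below -/
import Mathlib

section
/- Let α, β : ℝ → ℝ³ be two unit-speed C^∞ curves with Frenet frames (t, n, b) and (t*, n*, b*) respectively, related by a reparametrization s ↦ s*(s), such that α(s) = β(s*(s)) + λ(s*(s)) · b*(s*(s)) for a smooth function λ, and such that at corresponding points the principal normal n(s) of α is parallel to the binormal b*(s*(s)) of β (i.e. they are linearly dependent). Then λ is a constant function; in particular the distance d(α(s), β(s*(s))) is constant for all s. -/
open scoped RealInnerProductSpace

/-- For a Mannheim pair in ℝ³, with α(s) = β(σ(s)) + λ(σ(s))·b*(σ(s)) and the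
principal normal of α parallel to the binormal of β at corresponding points, the function λ
is constant along the correspondence, and the distance between corresponding points is constant. -/
theorem mannheim3_lambda_and_dist_const
    (α β t n b tst nst bst : ℝ → EuclideanSpace ℝ (Fin 3))
    (k r kst rst : ℝ → ℝ) (σ lam : ℝ → ℝ)
    (hαsm : ContDiff ℝ (⊤ : ℕ∞) α) (hβsm : ContDiff ℝ (⊤ : ℕ∞) β)
    (hσsm : ContDiff ℝ (⊤ : ℕ∞) σ) (hlamsm : ContDiff ℝ (⊤ : ℕ∞) lam)
    -- α is unit speed with Frenet frame (t, n, b), curvature k > 0 and torsion r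
    (hα' : ∀ s, deriv α s = t s)
    (ht : ∀ s, deriv t s = k s • n s)
    (hn : ∀ s, deriv n s = (-(k s)) • t s + r s • b s)
    (hb : ∀ s, deriv b s = (-(r s)) • n s)
    (hk : ∀ s, 0 < k s)
    (honα : ∀ s, Orthonormal ℝ ![t s, n s, b s])
    -- β is unit speed with Frenet frame (t*, n*, b*), curvature k* > 0 and torsion r*
    (hβ' : ∀ u, deriv β u = tst u)
    (htst : ∀ u, deriv tst u = kst u • nst u)
    (hnst : ∀ u, deriv nst u = (-(kst u)) • tst u + rst u • bst u)
    (hbst : ∀ u, deriv bst u = (-(rst u)) • nst u)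
    (hkst : ∀ u, 0 < kst u)
    (honβ : ∀ u, Orthonormal ℝ ![tst u, nst u, bst u])
    -- the Mannheim correspondence
    (hrel : ∀ s, α s = β (σ s) + lam (σ s) • bst (σ s))
    (hpar : ∀ s, ∃ c : ℝ, n s = c • bst (σ s)) :
    (∃ c : ℝ, ∀ s, lam (σ s) = c) ∧ (∃ d : ℝ, ∀ s, dist (α s) (β (σ s)) = d) := by
  -- basic orthonormality facts
  have hbstnorm : ∀ u, ‖bst u‖ = 1 := by
    intro u
    have := (honβ u).1 2
    simpa using this
  have htstbst : ∀ u, ⟪tst u, bst u⟫ = 0 := by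
    intro u
    have := (honβ u).2 (i := 0) (j := 2) (by decide)
    simpa using this
  have hnnorm : ∀ s, ‖n s‖ = 1 := by
    intro s
    have := (honα s).1 1
    simpa using this
  have htn : ∀ s, ⟪t s, n s⟫ = 0 := by
    intro s
    have := (honα s).2 (i := 0) (j := 1) (by decide)
    simpa using this
  -- t(s) is orthogonal to bst(σ s)
  have htbst : ∀ s, ⟪t s, bst (σ s)⟫ = 0 := by
    intro s
    obtain ⟨c, hc⟩ := hpar s
    have hcne : c ≠ 0 := by
      intro h
      have := hnnorm s
      rw [hc, h, zero_smul, norm_zero] at this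
      norm_num at this
    have h0 := htn s
    rw [hc, real_inner_smul_right] at h0
    exact (mul_eq_zero.mp h0).resolve_left hcne
  -- γ s = α s - β (σ s)
  set γ : ℝ → EuclideanSpace ℝ (Fin 3) := fun s => α s - β (σ s) with hγ
  have hγval : ∀ s, γ s = lam (σ s) • bst (σ s) := by
    intro s
    simp [hγ, hrel s]
  have hγder : ∀ s, HasDerivAt γ (t s - deriv σ s • tst (σ s)) s := by
    intro s
    have hαd : HasDerivAt α (t s) s := by
      have := (hαsm.differentiable (by simp) s).hasDerivAt
      rwa [hα' s] at this
    have hσd : HasDerivAt σ (deriv σ s) s := (hσsm.differentiable (by simp) s).hasDerivAt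
    have hβd : HasDerivAt β (tst (σ s)) (σ s) := by
      have := (hβsm.differentiable (by simp) (σ s)).hasDerivAt
      rwa [hβ' (σ s)] at this
    exact hαd.sub (hβd.scomp s hσd)
  -- f s = ⟪γ s, γ s⟫ has zero derivative
  set f : ℝ → ℝ := fun s => ⟪γ s, γ s⟫ with hf
  have hfder : ∀ s, HasDerivAt f 0 s := by
    intro s
    have h := (hγder s).inner ℝ (hγder s)
    have hz : ⟪γ s, t s - deriv σ s • tst (σ s)⟫ + ⟪t s - deriv σ s • tst (σ s), γ s⟫ = 0 := by
      rw [real_inner_comm (γ s)]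
      rw [hγval s, real_inner_smul_left, inner_sub_right, real_inner_smul_right]
      have h1 : ⟪bst (σ s), t s⟫ = 0 := by rw [real_inner_comm]; exact htbst s
      have h2 : ⟪bst (σ s), tst (σ s)⟫ = 0 := by rw [real_inner_comm]; exact htstbst (σ s)
      rw [h1, h2]; ring
    rwa [hz] at h
  have hfconst : ∀ s, f s = f 0 :=
    fun s => is_const_of_deriv_eq_zero (fun x => (hfder x).differentiableAt)
      (fun x => (hfder x).deriv) s 0
  -- f s = (lam (σ s))^2
  have hfval : ∀ s, f s = lam (σ s) * lam (σ s) := by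
    intro s
    rw [hf]
    simp only [hγval s]
    rw [real_inner_smul_left, real_inner_smul_right, real_inner_self_eq_norm_sq,
      hbstnorm (σ s)]
    ring
  have hsq : ∀ s, lam (σ s) * lam (σ s) = lam (σ 0) * lam (σ 0) := by
    intro s
    rw [← hfval s, ← hfval 0, hfconst s]
  -- lam ∘ σ is constant
  have hcont : Continuous (fun s => lam (σ s)) :=
    (hlamsm.continuous).comp (hσsm.continuous)
  have hlamconst : ∀ s, lam (σ s) = lam (σ 0) := by
    intro s
    rcases mul_self_eq_mul_self_iff.mp (hsq s) with h | h
    · exact h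
    · by_cases h0 : lam (σ 0) = 0
      · rw [h, h0, neg_zero]
      · exfalso
        have h0mem : (0 : ℝ) ∈ Set.uIcc (lam (σ 0)) (lam (σ s)) := by
          rw [h]
          rcases lt_or_gt_of_ne h0 with hlt | hgt
          · exact Set.mem_uIcc.mpr (Or.inl ⟨by linarith, by linarith⟩)
          · exact Set.mem_uIcc.mpr (Or.inr ⟨by linarith, by linarith⟩)
        have := intermediate_value_uIcc (a := 0) (b := s) hcont.continuousOn h0mem
        obtain ⟨x, _, hx⟩ := this
        have hx' : lam (σ x) = 0 := hx
        have := hsq x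
        rw [hx'] at this
        exact h0 (by nlinarith)
  constructor
  · exact ⟨lam (σ 0), hlamconst⟩
  · refine ⟨|lam (σ 0)|, fun s => ?_⟩
    have hv : α s - β (σ s) = lam (σ s) • bst (σ s) := hγval s
    rw [dist_eq_norm, hv, norm_smul, hbstnorm (σ s), hlamconst s]
    simp
end

section
/- Let α : I → ℝ³ be a unit-speed curve with curvature k > 0 and torsion r, and suppose α is a Mannheim curve, i.e. there is a curve β(s) = α(s) + λ(s) n(s) whose binormal at corresponding points is parallel to n(s). Then λ is a nonzero constant and the curvatures satisfy k(s) = λ (k(s)² + r(s)²) for all s ∈ I. -/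
open scoped RealInnerProductSpace

/-- Cross product on ℝ³ (Euclidean space). -/
noncomputable def cross3 (u v : EuclideanSpace ℝ (Fin 3)) : EuclideanSpace ℝ (Fin 3) :=
  (EuclideanSpace.equiv (Fin 3) ℝ).symm
    ![u 1 * v 2 - u 2 * v 1, u 2 * v 0 - u 0 * v 2, u 0 * v 1 - u 1 * v 0]


lemma cross3_inner_left (u v : EuclideanSpace ℝ (Fin 3)) : ⟪cross3 u v, u⟫ = 0 := by
  simp [cross3, PiLp.inner_apply, Fin.sum_univ_three, EuclideanSpace.equiv]
  ring

lemma cross3_inner_right (u v : EuclideanSpace ℝ (Fin 3)) : ⟪cross3 u v, v⟫ = 0 := by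
  simp [cross3, PiLp.inner_apply, Fin.sum_univ_three, EuclideanSpace.equiv]
  ring


/-- If α is a unit-speed Mannheim curve in ℝ³ with partner
β(s) = α(s) + λ(s) n(s) whose binormal (∝ β'×β'') is parallel to n at corresponding
points, then λ is a nonzero constant and k = λ(k² + r²). -/
theorem mannheim3_curvature_relation
    (α t n b β : ℝ → EuclideanSpace ℝ (Fin 3))
    (k r lam : ℝ → ℝ)
    (hαsm : ContDiff ℝ (⊤ : ℕ∞) α) (hlamsm : ContDiff ℝ (⊤ : ℕ∞) lam)
    (hα' : ∀ s, deriv α s = t s)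
    (ht : ∀ s, deriv t s = k s • n s)
    (hn : ∀ s, deriv n s = (-(k s)) • t s + r s • b s)
    (hb : ∀ s, deriv b s = (-(r s)) • n s)
    (hk : ∀ s, 0 < k s)
    (hon : ∀ s, Orthonormal ℝ ![t s, n s, b s])
    (hβdef : ∀ s, β s = α s + lam s • n s)
    -- the binormal direction of β is parallel to the principal normal of α
    (hpar : ∀ s, ∃ c : ℝ, c ≠ 0 ∧ cross3 (deriv β s) (deriv (deriv β) s) = c • n s) :
    ∃ c : ℝ, c ≠ 0 ∧ (∀ s, lam s = c) ∧ ∀ s, k s = c * ((k s) ^ 2 + (r s) ^ 2) := by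
  have hinner : ∀ s (i j : Fin 3),
      ⟪![t s, n s, b s] i, ![t s, n s, b s] j⟫ = if i = j then 1 else 0 := by
    intro s i j
    exact orthonormal_iff_ite.mp (hon s) i j
  have htt : ∀ s, ⟪t s, t s⟫ = 1 := fun s => by simpa using hinner s 0 0
  have hnn : ∀ s, ⟪n s, n s⟫ = 1 := fun s => by simpa using hinner s 1 1
  have hbb : ∀ s, ⟪b s, b s⟫ = 1 := fun s => by simpa using hinner s 2 2
  have htn : ∀ s, ⟪t s, n s⟫ = 0 := fun s => by simpa using hinner s 0 1
  have hbn : ∀ s, ⟪b s, n s⟫ = 0 := fun s => by simpa using hinner s 2 1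
  have htb : ∀ s, ⟪t s, b s⟫ = 0 := fun s => by simpa using hinner s 0 2
  have htfun : t = deriv α := funext fun s => (hα' s).symm
  have htsm : ContDiff ℝ (⊤:ℕ∞) t := by
    rw [htfun]; exact (contDiff_infty_iff_deriv.mp (hαsm.of_le (by simp))).2
  have hdtsm : ContDiff ℝ (⊤:ℕ∞) (deriv t) := (contDiff_infty_iff_deriv.mp htsm).2
  have hn0 : ∀ s, n s ≠ 0 := by
    intro s h
    have := hnn s
    rw [h] at this; simp at this
  have hdt0 : ∀ s, deriv t s ≠ 0 := by
    intro s h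
    rw [ht s] at h
    rcases smul_eq_zero.mp h with h | h
    · exact (hk s).ne' h
    · exact hn0 s h
  have hknorm : ∀ s, ‖deriv t s‖ = k s := by
    intro s
    rw [ht s, norm_smul]
    have : ‖n s‖ = 1 := by
      have := hnn s
      rw [real_inner_self_eq_norm_sq] at this
      nlinarith [norm_nonneg (n s)]
    rw [this, Real.norm_eq_abs, abs_of_pos (hk s), mul_one]
  have hnfun : n = fun s => ‖deriv t s‖⁻¹ • deriv t s := by
    funext s
    rw [hknorm s, ht s, smul_smul, inv_mul_cancel₀ (hk s).ne', one_smul]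
  have hnsm : ContDiff ℝ (⊤:ℕ∞) n := by
    rw [hnfun, contDiff_iff_contDiffAt]
    intro s
    have h1 : ContDiffAt ℝ (⊤:ℕ∞) (fun s => ‖deriv t s‖) s :=
      (contDiffAt_norm ℝ (hdt0 s)).comp s hdtsm.contDiffAt
    exact (h1.inv (norm_ne_zero_iff.mpr (hdt0 s))).smul hdtsm.contDiffAt
  have hdnsm : ContDiff ℝ (⊤:ℕ∞) (deriv n) := (contDiff_infty_iff_deriv.mp hnsm).2
  have hndiff : Differentiable ℝ n := hnsm.differentiable (by simp)
  have hdndiff : Differentiable ℝ (deriv n) := hdnsm.differentiable (by simp)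
  have htdiff : Differentiable ℝ t := htsm.differentiable (by simp)
  have hlam : Differentiable ℝ lam := hlamsm.differentiable (by simp)
  -- first derivative of β
  have hβ' : ∀ s, HasDerivAt β (t s + (deriv lam s • n s + lam s • deriv n s)) s := by
    intro s
    have h1 : HasDerivAt α (t s) s := by
      rw [← hα' s]
      exact (hαsm.differentiable (by simp) s).hasDerivAt
    have h2 : HasDerivAt (fun s => lam s • n s)
        (deriv lam s • n s + lam s • deriv n s) s := by
      have : HasDerivAt (fun s => lam s • n s) (lam s • deriv n s + deriv lam s • n s) s :=
        ((hlam s).hasDerivAt).smul ((hndiff s).hasDerivAt)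
      convert this using 1
      abel
    have h3 := h1.add h2
    have hβfun : β = fun s => α s + lam s • n s := funext hβdef
    rw [hβfun]
    exact h3
  have hderivβ : ∀ s, deriv β s = t s + (deriv lam s • n s + lam s • deriv n s) :=
    fun s => (hβ' s).deriv
  -- lam' = 0
  have hlam0 : ∀ s, deriv lam s = 0 := by
    intro s
    obtain ⟨c, hc, hcross⟩ := hpar s
    have h0 : ⟪cross3 (deriv β s) (deriv (deriv β) s), deriv β s⟫ = 0 := cross3_inner_left _ _
    rw [hcross, real_inner_smul_left] at h0
    have h1 : ⟪n s, deriv β s⟫ = 0 := (mul_eq_zero.mp h0).resolve_left hc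
    have hnt : ⟪n s, t s⟫ = 0 := by rw [real_inner_comm]; exact htn s
    have hnb : ⟪n s, b s⟫ = 0 := by rw [real_inner_comm]; exact hbn s
    rw [hderivβ s, hn s] at h1
    simp only [inner_add_right, real_inner_smul_right] at h1
    rw [hnt, hnb, hnn s] at h1
    linarith
  set c0 : ℝ := lam 0 with hc0
  have hlamc : ∀ s, lam s = c0 := fun s => is_const_of_deriv_eq_zero hlam hlam0 s 0
  -- second derivative of β
  have hderivβfun : deriv β = fun s => t s + c0 • deriv n s := by
    funext s
    rw [hderivβ s, hlam0 s, hlamc s]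
    simp
  have hβ'' : ∀ s, deriv (deriv β) s = deriv t s + c0 • deriv (deriv n) s := by
    intro s
    rw [hderivβfun]
    have h1 : HasDerivAt (fun s => t s + c0 • deriv n s)
        (deriv t s + c0 • deriv (deriv n) s) s :=
      ((htdiff s).hasDerivAt).add (((hdndiff s).hasDerivAt).const_smul c0)
    exact h1.deriv
  -- ⟪deriv (deriv n) s, n s⟫ = -(k² + r²)
  have hddn : ∀ s, ⟪deriv (deriv n) s, n s⟫ = -((k s)^2 + (r s)^2) := by
    intro s
    have hφ : (fun s => (⟪deriv n s, n s⟫ : ℝ)) = fun _ => (0:ℝ) := by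
      funext u
      rw [hn u]
      simp only [inner_add_left, real_inner_smul_left]
      rw [htn u, hbn u]
      ring
    have hder : HasDerivAt (fun s => (⟪deriv n s, n s⟫ : ℝ))
        (⟪deriv (deriv n) s, n s⟫ + ⟪deriv n s, deriv n s⟫) s :=
      by simpa [add_comm] using ((hdndiff s).hasDerivAt).inner ℝ ((hndiff s).hasDerivAt)
    have h0 : deriv (fun s => (⟪deriv n s, n s⟫ : ℝ)) s = 0 := by
      rw [hφ]; simp
    have h1 : ⟪deriv (deriv n) s, n s⟫ + ⟪deriv n s, deriv n s⟫ = 0 := by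
      rw [← hder.deriv, h0]
    have h2 : (⟪deriv n s, deriv n s⟫ : ℝ) = (k s)^2 + (r s)^2 := by
      rw [hn s]
      simp only [inner_add_left, inner_add_right, real_inner_smul_left, real_inner_smul_right]
      have hbt : ⟪b s, t s⟫ = 0 := by rw [real_inner_comm]; exact htb s
      rw [htt s, hbb s, htb s, hbt]
      ring
    linarith
  -- main relation
  have hrel : ∀ s, k s = c0 * ((k s)^2 + (r s)^2) := by
    intro s
    obtain ⟨c, hc, hcross⟩ := hpar s
    have h0 : ⟪cross3 (deriv β s) (deriv (deriv β) s), deriv (deriv β) s⟫ = 0 :=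
      cross3_inner_right _ _
    rw [hcross, real_inner_smul_left] at h0
    have h1 : ⟪n s, deriv (deriv β) s⟫ = 0 := (mul_eq_zero.mp h0).resolve_left hc
    rw [hβ'' s, ht s] at h1
    simp only [inner_add_right, real_inner_smul_right] at h1
    have hnd : ⟪n s, deriv (deriv n) s⟫ = -((k s)^2 + (r s)^2) := by
      rw [real_inner_comm]; exact hddn s
    rw [hnd, hnn s] at h1
    linarith
  refine ⟨c0, ?_, hlamc, hrel⟩
  intro h
  have := hrel 0
  rw [h] at this
  simp at this
  exact (hk 0).ne' this
end

section
/- Let α : I → ℝ³ be a unit-speed curve with curvature k > 0 and torsion r such that k(s) = λ(k(s)² + r(s)²) for all s, where λ is a nonzero constant. Define β(s) = α(s) + λ n(s), where n is the principal normal of α. Then at each point the binormal of β (after reparametrization by arc length) is parallel to n(s); i.e., α is a Mannheim curve with Mannheim partner β. -/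
open scoped RealInnerProductSpace

lemma cross3_apply (u v : EuclideanSpace ℝ (Fin 3)) (i : Fin 3) :
    cross3 u v i = ![u 1 * v 2 - u 2 * v 1, u 2 * v 0 - u 0 * v 2, u 0 * v 1 - u 1 * v 0] i := rfl

lemma ortho_expand (t n b x : EuclideanSpace ℝ (Fin 3))
    (h : Orthonormal ℝ ![t, n, b]) :
    x = ⟪t, x⟫ • t + ⟪n, x⟫ • n + ⟪b, x⟫ • b := by
  have hcard : Fintype.card (Fin 3) = Module.finrank ℝ (EuclideanSpace ℝ (Fin 3)) := by
    simp
  have hspan : ⊤ ≤ Submodule.span ℝ (Set.range ![t, n, b]) :=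
    (h.linearIndependent.span_eq_top_of_card_eq_finrank hcard).ge
  let B := OrthonormalBasis.mk h hspan
  have := B.sum_repr' x
  rw [Fin.sum_univ_three] at this
  have hB : ∀ i, B i = ![t, n, b] i := fun i => by
    simp [B, OrthonormalBasis.coe_mk]
  rw [hB 0, hB 1, hB 2] at this
  simpa using this.symm

lemma inner_euc (u v : EuclideanSpace ℝ (Fin 3)) :
    ⟪u, v⟫ = u 0 * v 0 + u 1 * v 1 + u 2 * v 2 := by
  simp [PiLp.inner_apply, Fin.sum_univ_three, mul_comm]

lemma cross3_bilin (x y : EuclideanSpace ℝ (Fin 3)) (a c a' c' : ℝ) :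
    cross3 (a • x + c • y) (a' • x + c' • y) = (a * c' - c * a') • cross3 x y := by
  refine PiLp.ext fun i => ?_
  fin_cases i <;>
    simp [cross3_apply, PiLp.add_apply, PiLp.smul_apply, smul_eq_mul] <;> ring

lemma cross3_perp (t n b u v : EuclideanSpace ℝ (Fin 3))
    (h : Orthonormal ℝ ![t, n, b]) (hu : ⟪n, u⟫ = 0) (hv : ⟪n, v⟫ = 0) :
    ∃ c : ℝ, cross3 u v = c • n := by
  obtain ⟨a, c, hu'⟩ : ∃ a c, u = a • t + c • b := by
    refine ⟨⟪t, u⟫, ⟪b, u⟫, ?_⟩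
    have := ortho_expand t n b u h; rw [hu] at this
    simpa using this
  obtain ⟨a', c', hv'⟩ : ∃ a' c', v = a' • t + c' • b := by
    refine ⟨⟪t, v⟫, ⟪b, v⟫, ?_⟩
    have := ortho_expand t n b v h; rw [hv] at this
    simpa using this
  have hw : cross3 u v = (a * c' - c * a') • cross3 t b := by
    rw [hu', hv', cross3_bilin]
  -- cross3 t b is orthogonal to t and b
  have htb1 : ⟪t, cross3 t b⟫ = 0 := by
    simp only [inner_euc, cross3_apply]
    simp [Matrix.cons_val_zero, Matrix.cons_val_one]
    ring
  have htb2 : ⟪b, cross3 t b⟫ = 0 := by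
    simp only [inner_euc, cross3_apply]
    simp [Matrix.cons_val_zero, Matrix.cons_val_one]
    ring
  obtain ⟨μ, hμ⟩ : ∃ μ, cross3 t b = μ • n := by
    refine ⟨⟪n, cross3 t b⟫, ?_⟩
    have := ortho_expand t n b (cross3 t b) h
    rw [htb1, htb2] at this; simpa using this
  exact ⟨(a * c' - c * a') * μ, by rw [hw, hμ, smul_smul]⟩

/-- If a unit-speed curve α in ℝ³ satisfies k = λ(k² + r²) for a nonzero
constant λ, then the curve β(s) = α(s) + λ n(s) has binormal direction (∝ β'×β'')
parallel to the principal normal n of α at corresponding points, i.e. α is a Mannheim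
curve with Mannheim partner β. -/
theorem mannheim3_curvature_relation_converse
    (α t n b β : ℝ → EuclideanSpace ℝ (Fin 3))
    (k r : ℝ → ℝ) (lam : ℝ)
    (hαsm : ContDiff ℝ (⊤ : ℕ∞) α) (hlam : lam ≠ 0)
    (hα' : ∀ s, deriv α s = t s)
    (ht : ∀ s, deriv t s = k s • n s)
    (hn : ∀ s, deriv n s = (-(k s)) • t s + r s • b s)
    (hb : ∀ s, deriv b s = (-(r s)) • n s)
    (hk : ∀ s, 0 < k s)
    (hon : ∀ s, Orthonormal ℝ ![t s, n s, b s])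
    (hrel : ∀ s, k s = lam * ((k s) ^ 2 + (r s) ^ 2))
    (hβdef : ∀ s, β s = α s + lam • n s) :
    ∀ s, ∃ c : ℝ, cross3 (deriv β s) (deriv (deriv β) s) = c • n s := by
  -- orthonormality facts
  have hfacts : ∀ s, ⟪n s, t s⟫ = 0 ∧ ⟪n s, n s⟫ = 1 ∧ ⟪n s, b s⟫ = 0 ∧
      ⟪t s, t s⟫ = 1 ∧ ⟪b s, b s⟫ = 1 ∧ ⟪t s, b s⟫ = 0 := by
    intro s
    have h1 := (hon s).1
    have h2 := (hon s).2
    have e0 := h1 0; have e1 := h1 1; have e2 := h1 2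
    simp only [Matrix.cons_val_zero, Matrix.cons_val_one, Matrix.head_cons,
      Matrix.cons_val_two, Matrix.tail_cons] at e0 e1 e2
    have p01 := h2 (show (0:Fin 3) ≠ 1 by decide)
    have p02 := h2 (show (0:Fin 3) ≠ 2 by decide)
    have p12 := h2 (show (1:Fin 3) ≠ 2 by decide)
    simp only [Matrix.cons_val_zero, Matrix.cons_val_one, Matrix.head_cons,
      Matrix.cons_val_two, Matrix.tail_cons] at p01 p02 p12
    refine ⟨by rw [real_inner_comm]; exact p01, ?_, p12, ?_, ?_, p02⟩
    · rw [real_inner_self_eq_norm_mul_norm, e1]; ring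
    · rw [real_inner_self_eq_norm_mul_norm, e0]; ring
    · rw [real_inner_self_eq_norm_mul_norm, e2]; ring
  have hαT : ContDiff ℝ (⊤ : ℕ∞) α := hαsm.of_le (by simp)
  have hα'sm : ContDiff ℝ (⊤ : ℕ∞) (deriv α) := (contDiff_infty_iff_deriv.mp hαT).2
  have hα''sm : ContDiff ℝ (⊤ : ℕ∞) (deriv (deriv α)) := (contDiff_infty_iff_deriv.mp hα'sm).2
  have hd2 : ∀ s, deriv (deriv α) s = k s • n s := by
    intro s
    rw [show deriv α = t from funext hα', ht]
  have hnorm : ∀ s, ‖n s‖ = 1 := by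
    intro s
    have := (hon s).1 1
    simpa using this
  have hd2norm : ∀ s, ‖deriv (deriv α) s‖ = k s := by
    intro s
    rw [hd2, norm_smul, hnorm, Real.norm_eq_abs, abs_of_pos (hk s), mul_one]
  have hng : ∀ s, n s = ‖deriv (deriv α) s‖⁻¹ • deriv (deriv α) s := by
    intro s
    rw [hd2norm, hd2, smul_smul, inv_mul_cancel₀ (hk s).ne', one_smul]
  have hnsm : ContDiff ℝ (⊤ : ℕ∞) n := by
    rw [show n = fun s => ‖deriv (deriv α) s‖⁻¹ • deriv (deriv α) s from funext hng]
    refine contDiff_iff_contDiffAt.mpr fun s => ?_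
    have h0 : deriv (deriv α) s ≠ 0 := by
      rw [← norm_ne_zero_iff, hd2norm]; exact (hk s).ne'
    exact ((hα''sm.contDiffAt.norm ℝ h0).inv (by rw [hd2norm]; exact (hk s).ne')).smul
      hα''sm.contDiffAt
  have hn'sm : ContDiff ℝ (⊤ : ℕ∞) (deriv n) := (contDiff_infty_iff_deriv.mp hnsm).2
  -- first derivative of β
  have hβ' : ∀ s, deriv β s = t s + lam • deriv n s := by
    intro s
    have h1 : HasDerivAt α (t s) s := by
      have := (hαT.differentiable (by simp) s).hasDerivAt
      rwa [hα'] at this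
    have h2 : HasDerivAt (fun x => lam • n x) (lam • deriv n s) s :=
      ((hnsm.differentiable (by simp) s).hasDerivAt).const_smul lam
    have := (h1.add h2).deriv
    rwa [show β = fun x => α x + lam • n x from funext hβdef]
  have hβ'fun : deriv β = fun x => deriv α x + lam • deriv n x :=
    funext fun s => by rw [hβ' s, ← hα' s]
  -- second derivative of β
  have hβ'' : ∀ s, deriv (deriv β) s =
      deriv (deriv α) s + lam • deriv (deriv n) s := by
    intro s
    have h1 : HasDerivAt (deriv α) (deriv (deriv α) s) s :=
      (hα'sm.differentiable (by simp) s).hasDerivAt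
    have h2 : HasDerivAt (fun x => lam • deriv n x) (lam • deriv (deriv n) s) s :=
      ((hn'sm.differentiable (by simp) s).hasDerivAt).const_smul lam
    have := (h1.add h2).deriv
    rwa [hβ'fun]
  intro s
  obtain ⟨hNT, hNN, hNB, hTT, hBB, hTB⟩ := hfacts s
  -- β' ⊥ n
  have hperp1 : ⟪n s, deriv β s⟫ = 0 := by
    rw [hβ' s, hn s]
    simp only [inner_add_right, inner_smul_right, hNT, hNB, hNN]
    ring
  -- ⟪n', n⟫ ≡ 0
  have hzero : (fun x => ⟪deriv n x, n x⟫) = fun _ => (0 : ℝ) := by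
    funext x
    obtain ⟨hNT', hNN', hNB', _, _, _⟩ := hfacts x
    rw [hn x]
    simp only [inner_add_left, inner_smul_left, conj_trivial]
    simp only [real_inner_comm (n x) (t x), real_inner_comm (n x) (b x), hNT', hNB']
    ring
  have hD : HasDerivAt (fun x => ⟪deriv n x, n x⟫)
      (⟪deriv n s, deriv n s⟫ + ⟪deriv (deriv n) s, n s⟫) s :=
    HasDerivAt.inner ℝ ((hn'sm.differentiable (by simp) s).hasDerivAt)
      ((hnsm.differentiable (by simp) s).hasDerivAt)
  have hDval : ⟪deriv n s, deriv n s⟫ + ⟪deriv (deriv n) s, n s⟫ = 0 := by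
    have h0 : HasDerivAt (fun x => ⟪deriv n x, n x⟫) 0 s := by
      rw [hzero]; exact hasDerivAt_const s 0
    exact hD.unique h0
  have hn'n' : ⟪deriv n s, deriv n s⟫ = k s ^ 2 + r s ^ 2 := by
    rw [hn s]
    simp only [inner_add_left, inner_add_right, inner_smul_left, inner_smul_right,
      conj_trivial, hTT, hTB, hBB]
    simp only [real_inner_comm (t s) (b s), hTB]
    ring
  -- β'' ⊥ n
  have hperp2 : ⟪n s, deriv (deriv β) s⟫ = 0 := by
    rw [hβ'' s, hd2 s]
    simp only [inner_add_right, inner_smul_right, hNN]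
    have : ⟪n s, deriv (deriv n) s⟫ = -(k s ^ 2 + r s ^ 2) := by
      rw [real_inner_comm]; linarith [hDval, hn'n']
    rw [this]
    nlinarith [hrel s]
  exact cross3_perp (t s) (n s) (b s) _ _ (hon s) hperp1 hperp2
end

section
/- Let β : I → ℝ³ be a unit-speed curve with curvature k* > 0 and torsion r* satisfying dr*/ds* = (k*/μ)(1 + μ²(r*)²) for a nonzero constant μ. Define α(s*) = β(s*) + μ b*(s*), where b* is the binormal of β. Then the principal normal vector field of α (as a regular curve, reparametrized by arc length) is parallel to the binormal b* of β at corresponding points; i.e., α is a Mannheim curve with Mannheim partner β. -/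
open scoped RealInnerProductSpace

lemma triple (u v w : EuclideanSpace ℝ (Fin 3)) :
    cross3 (cross3 u v) w = ⟪u, w⟫ • v - ⟪w, v⟫ • u := by
  ext i
  have hin : ∀ a b : EuclideanSpace ℝ (Fin 3), ⟪a,b⟫ = a 0 * b 0 + a 1 * b 1 + a 2 * b 2 := by
    intro a b
    simp [PiLp.inner_apply, Fin.sum_univ_three, RCLike.inner_apply, mul_comm]
  fin_cases i <;>
    simp [cross3_apply, hin, PiLp.sub_apply, PiLp.smul_apply, smul_eq_mul] <;> ring

lemma cross3_zero_right (v : EuclideanSpace ℝ (Fin 3)) : cross3 v 0 = 0 := by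
  ext i; fin_cases i <;> simp [cross3_apply]

set_option maxHeartbeats 1000000 in
/-- If a unit-speed curve β in ℝ³ with curvature k* > 0 and torsion r*
satisfies dr*/ds* = (k*/μ)(1 + μ²(r*)²) for a nonzero constant μ, then for the curve
α(s*) = β(s*) + μ b*(s*), the principal normal direction of α (proportional to
(α'×α'')×α') is parallel to the binormal b* of β at corresponding points; i.e. α is a
Mannheim curve with Mannheim partner β. -/
theorem mannheim3_partner_curvature_ode_converse
    (β tst nst bst α : ℝ → EuclideanSpace ℝ (Fin 3))
    (kst rst : ℝ → ℝ) (μ : ℝ)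
    (hβsm : ContDiff ℝ (⊤ : ℕ∞) β) (hμ : μ ≠ 0)
    (hβ' : ∀ u, deriv β u = tst u)
    (htst : ∀ u, deriv tst u = kst u • nst u)
    (hnst : ∀ u, deriv nst u = (-(kst u)) • tst u + rst u • bst u)
    (hbst : ∀ u, deriv bst u = (-(rst u)) • nst u)
    (hkst : ∀ u, 0 < kst u)
    (hon : ∀ u, Orthonormal ℝ ![tst u, nst u, bst u])
    (hode : ∀ u, deriv rst u = (kst u / μ) * (1 + μ ^ 2 * (rst u) ^ 2))
    (hαdef : ∀ u, α u = β u + μ • bst u) :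
    ∀ u, ∃ c : ℝ,
      cross3 (cross3 (deriv α u) (deriv (deriv α) u)) (deriv α u) = c • bst u := by
  have hinner : ∀ u (i j : Fin 3),
      ⟪(![tst u, nst u, bst u]) i, (![tst u, nst u, bst u]) j⟫ = if i = j then (1:ℝ) else 0 := by
    intro u; exact orthonormal_iff_ite.mp (hon u)
  have hTT : ∀ u, ⟪tst u, tst u⟫ = (1:ℝ) := fun u => by simpa using hinner u 0 0
  have hNN : ∀ u, ⟪nst u, nst u⟫ = (1:ℝ) := fun u => by simpa using hinner u 1 1
  have hBB : ∀ u, ⟪bst u, bst u⟫ = (1:ℝ) := fun u => by simpa using hinner u 2 2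
  have hTN : ∀ u, ⟪tst u, nst u⟫ = (0:ℝ) := fun u => by simpa using hinner u 0 1
  have hNT : ∀ u, ⟪nst u, tst u⟫ = (0:ℝ) := fun u => by simpa using hinner u 1 0
  have hTB : ∀ u, ⟪tst u, bst u⟫ = (0:ℝ) := fun u => by simpa using hinner u 0 2
  have hBT : ∀ u, ⟪bst u, tst u⟫ = (0:ℝ) := fun u => by simpa using hinner u 2 0
  have hNB : ∀ u, ⟪nst u, bst u⟫ = (0:ℝ) := fun u => by simpa using hinner u 1 2
  have hBN : ∀ u, ⟪bst u, nst u⟫ = (0:ℝ) := fun u => by simpa using hinner u 2 1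
  have hkne : ∀ u, kst u ≠ 0 := fun u => (hkst u).ne'
  have hNne : ∀ u, nst u ≠ 0 := by
    intro u h
    have := hNN u; rw [h] at this; simp at this
  -- rst is differentiable everywhere (its stated deriv is never zero)
  have hrd : ∀ u, HasDerivAt rst ((kst u / μ) * (1 + μ ^ 2 * (rst u) ^ 2)) u := by
    intro u
    have hne : (kst u / μ) * (1 + μ ^ 2 * (rst u) ^ 2) ≠ 0 := by
      have h1 : (0:ℝ) < 1 + μ ^ 2 * (rst u) ^ 2 := by positivity
      exact mul_ne_zero (div_ne_zero (hkne u) hμ) h1.ne'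
    have hd : DifferentiableAt ℝ rst u := by
      by_contra h
      have h0 := hode u
      rw [deriv_zero_of_not_differentiableAt h] at h0
      exact hne h0.symm
    simpa [hode u] using hd.hasDerivAt
  have htd : ∀ u, HasDerivAt tst (kst u • nst u) u := by
    intro u
    have hne : kst u • nst u ≠ 0 := smul_ne_zero (hkne u) (hNne u)
    have hd : DifferentiableAt ℝ tst u := by
      by_contra h
      have h0 := htst u
      rw [deriv_zero_of_not_differentiableAt h] at h0
      exact hne h0.symm
    simpa [htst u] using hd.hasDerivAt
  have hnd : ∀ u, HasDerivAt nst ((-(kst u)) • tst u + rst u • bst u) u := by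
    intro u
    have hne : (-(kst u)) • tst u + rst u • bst u ≠ 0 := by
      intro h
      have h2 : ⟪(-(kst u)) • tst u + rst u • bst u, tst u⟫ = (0:ℝ) := by rw [h]; simp
      rw [inner_add_left, real_inner_smul_left, real_inner_smul_left, hTT u, hBT u] at h2
      simp at h2
      exact hkne u h2
    have hd : DifferentiableAt ℝ nst u := by
      by_contra h
      have h0 := hnst u
      rw [deriv_zero_of_not_differentiableAt h] at h0
      exact hne h0.symm
    simpa [hnst u] using hd.hasDerivAt
  -- zeros of rst form a subsingleton
  have hrz : ∀ a b, rst a = 0 → rst b = 0 → a = b := by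
    intro a b ha hb
    by_contra hab
    wlog h : a < b generalizing a b
    · exact this b a hb ha (Ne.symm hab) (lt_of_le_of_ne (not_lt.mp h) (Ne.symm hab))
    have hcont : ContinuousOn rst (Set.Icc a b) :=
      (fun x _ => ((hrd x).differentiableAt.continuousAt).continuousWithinAt)
    obtain ⟨c, _, hc⟩ := exists_deriv_eq_zero (f := rst) h hcont (by rw [ha, hb])
    have h0 := hode c
    rw [hc] at h0
    have h1 : (0:ℝ) < 1 + μ ^ 2 * (rst c) ^ 2 := by positivity
    exact (mul_ne_zero (div_ne_zero (hkne c) hμ) h1.ne') h0.symm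
  have hαeq : α = fun x => β x + μ • bst x := funext hαdef
  have hβd : ∀ u, HasDerivAt β (tst u) u := by
    intro u
    have : DifferentiableAt ℝ β u := (hβsm.differentiable (by simp)).differentiableAt
    simpa [hβ' u] using this.hasDerivAt
  have hgoodlem : ∀ x, DifferentiableAt ℝ bst x →
      deriv α x = tst x - (μ * rst x) • nst x := by
    intro x h
    have hb : HasDerivAt bst ((-(rst x)) • nst x) x := by
      simpa [hbst x] using h.hasDerivAt
    have hαd : HasDerivAt α (tst x + μ • ((-(rst x)) • nst x)) x := by
      rw [hαeq]; exact (hβd x).add (hb.const_smul μ)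
    rw [hαd.deriv, smul_smul]
    module
  have hbadlem : ∀ x, ¬ DifferentiableAt ℝ bst x → deriv α x = 0 ∧ rst x = 0 := by
    intro x h
    have hα : ¬ DifferentiableAt ℝ α x := by
      intro hd
      apply h
      have hb : bst = fun y => μ⁻¹ • (α y - β y) := by
        funext y; rw [hαdef y]; simp [smul_smul, inv_mul_cancel₀ hμ]
      rw [hb]
      exact (hd.sub ((hβsm.differentiable (by simp)) x)).const_smul μ⁻¹
    refine ⟨deriv_zero_of_not_differentiableAt hα, ?_⟩
    have hb0 := hbst x
    rw [deriv_zero_of_not_differentiableAt h] at hb0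
    by_contra hr
    exact hNne x ((smul_eq_zero_iff_right (neg_ne_zero.mpr hr)).mp hb0.symm)
  intro u
  by_cases hgood : DifferentiableAt ℝ bst u
  · set a := rst u with ha
    set φ : ℝ → EuclideanSpace ℝ (Fin 3) := fun x => tst x - (μ * rst x) • nst x with hφ
    have hd1 : deriv α u = φ u := hgoodlem u hgood
    have heq : deriv α =ᶠ[nhds u] φ := by
      have hsub : {x | deriv α x ≠ φ x} ⊆ {x | rst x = 0} := by
        intro x hx
        by_cases h : DifferentiableAt ℝ bst x
        · exact absurd (hgoodlem x h) hx
        · exact (hbadlem x h).2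
      by_cases hz : ∃ p, rst p = 0
      · obtain ⟨p, hp⟩ := hz
        have hsub' : {x | deriv α x ≠ φ x} ⊆ {p} := fun x hx => hrz x p (hsub hx) hp
        by_cases hpu : p = u
        · refine Filter.Eventually.of_forall fun x => ?_
          by_cases hxp : x = p
          · rw [hxp, hpu]; exact hd1
          · by_contra hne; exact hxp (hsub' hne)
        · have hop : {p}ᶜ ∈ nhds u :=
            isOpen_compl_singleton.mem_nhds
              (Set.mem_compl_singleton_iff.mpr (fun h => hpu h.symm))
          filter_upwards [hop] with x hx
          by_contra hne
          exact hx (hsub' hne)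
      · refine Filter.Eventually.of_forall fun x => ?_
        by_contra hne
        exact hz ⟨x, hsub hne⟩
    obtain ⟨r', hr'd, hμr'⟩ : ∃ r' : ℝ, HasDerivAt rst r' u ∧ μ * r' = kst u * (1 + μ ^ 2 * a ^ 2) :=
      ⟨_, hrd u, by field_simp; rfl⟩
    have hφd : HasDerivAt φ
        (kst u • nst u - ((μ * a) • ((-(kst u)) • tst u + a • bst u) + (μ * r') • nst u)) u := by
      have h1 : HasDerivAt (fun x => μ * rst x) (μ * r') u := hr'd.const_mul μ
      have h2 := h1.smul (hnd u)
      exact (htd u).sub h2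
    have hd2 : deriv (deriv α) u =
        kst u • nst u - ((μ * a) • ((-(kst u)) • tst u + a • bst u) + (μ * r') • nst u) := by
      rw [Filter.EventuallyEq.deriv_eq heq]
      exact hφd.deriv
    refine ⟨-(μ * a ^ 2) * (1 + μ ^ 2 * a ^ 2), ?_⟩
    rw [hd1, hd2, triple]
    have hv : φ u = tst u - (μ * a) • nst u := rfl
    rw [hv]
    have hA : ⟪tst u - (μ * a) • nst u, tst u - (μ * a) • nst u⟫ = 1 + μ ^ 2 * a ^ 2 := by
      simp only [inner_sub_left, inner_sub_right, real_inner_smul_left, real_inner_smul_right,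
        hTT u, hNN u, hTN u, hNT u]
      ring
    have hB : ⟪tst u - (μ * a) • nst u,
        kst u • nst u - ((μ * a) • ((-(kst u)) • tst u + a • bst u) + (μ * r') • nst u)⟫
        = μ ^ 2 * a * r' - μ * a * kst u + μ * a * kst u := by
      simp only [inner_sub_left, inner_sub_right, inner_add_left, inner_add_right,
        real_inner_smul_left, real_inner_smul_right,
        hTT u, hNN u, hBB u, hTN u, hNT u, hTB u, hBT u, hNB u, hBN u]
      ring
    rw [hA, hB]
    match_scalars
    · linear_combination (-1 : ℝ) * hμr'
    · linear_combination (-(μ * a)) * hμr'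
    · ring
  · obtain ⟨h0, _⟩ := hbadlem u hgood
    refine ⟨0, ?_⟩
    rw [h0, triple]
    simp
end

section
/- Let α : I → ℝ⁴ be a unit-speed curve with Frenet frame (T, N, B₁, B₂) and curvatures K > 0, k > 0, (r − K), and let β(s) = α(s) + λ(s) N(s) be a curve (the generalized Mannheim partner) such that at each point, N(s) lies in the plane spanned by the third and fourth Frenet vectors B̄₁, B̄₂ of β at the corresponding point. Then λ is a constant function; in particular d(α(s), β(s)) is constant. -/
open scoped RealInnerProductSpace

/-- Let α be a unit-speed curve in ℝ⁴ with Frenet frame (T, N, B₁, B₂) and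
curvatures K > 0, k > 0, r − K, and let β (unit-speed, with frame (T̄, N̄, B̄₁, B̄₂) and
reparametrization ψ) be a generalized Mannheim partner: β(ψ(s)) = α(s) + λ(s) N(s) and
N(s) lies in the plane spanned by B̄₁ and B̄₂ at the corresponding point. Then λ is a
constant function; in particular d(α(s), β(ψ(s))) is constant. -/
theorem mannheim4_lambda_and_dist_const
    (α T N B₁ B₂ βc Tb Nb B1b B2b : ℝ → EuclideanSpace ℝ (Fin 4))
    (K k r Kb kb rb : ℝ → ℝ) (ψ lam : ℝ → ℝ)
    (hαsm : ContDiff ℝ (⊤ : ℕ∞) α) (hβsm : ContDiff ℝ (⊤ : ℕ∞) βc)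
    (hψsm : ContDiff ℝ (⊤ : ℕ∞) ψ) (hlamsm : ContDiff ℝ (⊤ : ℕ∞) lam)
    -- Frenet apparatus of α
    (hα' : ∀ s, deriv α s = T s)
    (hT : ∀ s, deriv T s = K s • N s)
    (hN : ∀ s, deriv N s = (-(K s)) • T s + k s • B₁ s)
    (hB₁ : ∀ s, deriv B₁ s = (-(k s)) • N s + (r s - K s) • B₂ s)
    (hB₂ : ∀ s, deriv B₂ s = (-(r s - K s)) • B₁ s)
    (hK : ∀ s, 0 < K s) (hk : ∀ s, 0 < k s)
    (hon : ∀ s, Orthonormal ℝ ![T s, N s, B₁ s, B₂ s])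
    -- Frenet apparatus of the partner βc
    (hβ' : ∀ u, deriv βc u = Tb u)
    (hTb : ∀ u, deriv Tb u = Kb u • Nb u)
    (hNb : ∀ u, deriv Nb u = (-(Kb u)) • Tb u + kb u • B1b u)
    (hB1b : ∀ u, deriv B1b u = (-(kb u)) • Nb u + (rb u - Kb u) • B2b u)
    (hB2b : ∀ u, deriv B2b u = (-(rb u - Kb u)) • B1b u)
    (hKb : ∀ u, 0 < Kb u) (hkb : ∀ u, 0 < kb u)
    (honb : ∀ u, Orthonormal ℝ ![Tb u, Nb u, B1b u, B2b u])
    -- the generalized Mannheim correspondence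
    (hrel : ∀ s, βc (ψ s) = α s + lam s • N s)
    (hspan : ∀ s, ∃ g h : ℝ, N s = g • B1b (ψ s) + h • B2b (ψ s)) :
    (∃ c : ℝ, ∀ s, lam s = c) ∧ (∃ d : ℝ, ∀ s, dist (α s) (βc (ψ s)) = d) := by

  have hαd : Differentiable ℝ α := hαsm.differentiable (by simp)
  have hβd : Differentiable ℝ βc := hβsm.differentiable (by simp)
  have hψd : Differentiable ℝ ψ := hψsm.differentiable (by simp)
  have hlamd : Differentiable ℝ lam := hlamsm.differentiable (by simp)
  have key : ∀ s, deriv lam s = 0 := by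
    intro s
    have honS := hon s
    have hTN : ⟪T s, N s⟫ = 0 := by
      have := honS.2 (i := 0) (j := 1) (by decide)
      simpa using this
    have hB1T : ⟪B₁ s, T s⟫ = 0 := by
      have := honS.2 (i := 2) (j := 0) (by decide)
      simpa using this
    have hB1N : ⟪B₁ s, N s⟫ = 0 := by
      have := honS.2 (i := 2) (j := 1) (by decide)
      simpa using this
    have hNnorm : ‖N s‖ = 1 := by
      have := honS.1 1
      simpa using this
    have hB1norm : ‖B₁ s‖ = 1 := by
      have := honS.1 2
      simpa using this
    have hNN : ⟪N s, N s⟫ = 1 := by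
      rw [real_inner_self_eq_norm_mul_norm, hNnorm]; ring
    have hB1B1 : ⟪B₁ s, B₁ s⟫ = 1 := by
      rw [real_inner_self_eq_norm_mul_norm, hB1norm]; ring
    -- N is differentiable at s
    have hNdiff : DifferentiableAt ℝ N s := by
      by_contra hc
      have h0 := deriv_zero_of_not_differentiableAt hc
      rw [hN s] at h0
      have := congrArg (fun v => ⟪B₁ s, v⟫) h0
      simp only [inner_add_right, real_inner_smul_right, inner_zero_right,
        hB1T, hB1B1] at this
      have hk0 : k s = 0 := by linarith
      exact (hk s).ne' hk0
    have hαD : HasDerivAt α (T s) s := hα' s ▸ (hαd s).hasDerivAt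
    have hND : HasDerivAt N ((-(K s)) • T s + k s • B₁ s) s :=
      hN s ▸ hNdiff.hasDerivAt
    have hlamD : HasDerivAt lam (deriv lam s) s := (hlamd s).hasDerivAt
    have hrhs := hαD.add (hlamD.smul hND)
    have hβD : HasDerivAt βc (Tb (ψ s)) (ψ s) := hβ' (ψ s) ▸ (hβd (ψ s)).hasDerivAt
    have hψD : HasDerivAt ψ (deriv ψ s) s := (hψd s).hasDerivAt
    have hcomp : HasDerivAt (fun t => βc (ψ t)) (deriv ψ s • Tb (ψ s)) s :=
      HasDerivAt.scomp s hβD hψD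
    have heqf : (fun t => βc (ψ t)) = fun t => α t + lam t • N t := funext hrel
    rw [heqf] at hcomp
    have heq := hcomp.unique hrhs
    -- ⟪Tb (ψ s), N s⟫ = 0
    have hTbN : ⟪Tb (ψ s), N s⟫ = 0 := by
      obtain ⟨g, h, hgh⟩ := hspan s
      have honB := honb (ψ s)
      have h1 : ⟪Tb (ψ s), B1b (ψ s)⟫ = 0 := by
        have := honB.2 (i := 0) (j := 2) (by decide)
        simpa using this
      have h2 : ⟪Tb (ψ s), B2b (ψ s)⟫ = 0 := by
        have := honB.2 (i := 0) (j := 3) (by decide)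
        simpa using this
      rw [hgh, inner_add_right, real_inner_smul_right, real_inner_smul_right, h1, h2]
      ring
    have hfin := congrArg (fun v => ⟪v, N s⟫) heq
    simp only [inner_add_left, real_inner_smul_left, hTbN, hTN, hNN, hB1N] at hfin
    norm_num at hfin
    linarith
  have hconst := is_const_of_deriv_eq_zero hlamd key
  refine ⟨⟨lam 0, fun s => hconst s 0⟩, ⟨|lam 0| , fun s => ?_⟩⟩
  have hNnorm : ‖N s‖ = 1 := by
    have := (hon s).1 1
    simpa using this
  rw [hrel s, dist_eq_norm]
  simp [norm_smul, hNnorm, hconst s 0]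
end

section
/- Let α : I → ℝ⁴ be a unit-speed generalized Mannheim curve with Frenet frame (T, N, B₁, B₂) and curvatures K > 0, k > 0, (r − K), with Mannheim partner β(ψ(s)) = α(s) + λ N(s) for a constant λ ≠ 0, where N(s) lies in the span of the third and fourth Frenet vectors of β at corresponding points. Then the first two curvature functions of α satisfy K(s) = λ (K(s)² + k(s)²) for all s ∈ I. -/
open scoped RealInnerProductSpace

/-- Let α be a unit-speed generalized Mannheim curve in ℝ⁴ with Frenet frame
(T, N, B₁, B₂), curvatures K > 0, k > 0, r − K, and Mannheim partner β(ψ(s)) = α(s) + λ N(s)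
for a constant λ ≠ 0, where N(s) lies in the span of B̄₁, B̄₂ of β at corresponding points.
Then K(s) = λ(K(s)² + k(s)²) for all s. -/
theorem mannheim4_curvature_relation
    (α T N B₁ B₂ βc Tb Nb B1b B2b : ℝ → EuclideanSpace ℝ (Fin 4))
    (K k r Kb kb rb : ℝ → ℝ) (ψ : ℝ → ℝ) (lam : ℝ)
    (hαsm : ContDiff ℝ (⊤ : ℕ∞) α) (hβsm : ContDiff ℝ (⊤ : ℕ∞) βc)
    (hψsm : ContDiff ℝ (⊤ : ℕ∞) ψ) (hlam : lam ≠ 0)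
    -- Frenet apparatus of α
    (hα' : ∀ s, deriv α s = T s)
    (hT : ∀ s, deriv T s = K s • N s)
    (hN : ∀ s, deriv N s = (-(K s)) • T s + k s • B₁ s)
    (hB₁ : ∀ s, deriv B₁ s = (-(k s)) • N s + (r s - K s) • B₂ s)
    (hB₂ : ∀ s, deriv B₂ s = (-(r s - K s)) • B₁ s)
    (hK : ∀ s, 0 < K s) (hk : ∀ s, 0 < k s)
    (hon : ∀ s, Orthonormal ℝ ![T s, N s, B₁ s, B₂ s])
    -- Frenet apparatus of the partner βc
    (hβ' : ∀ u, deriv βc u = Tb u)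
    (hTb : ∀ u, deriv Tb u = Kb u • Nb u)
    (hNb : ∀ u, deriv Nb u = (-(Kb u)) • Tb u + kb u • B1b u)
    (hB1b : ∀ u, deriv B1b u = (-(kb u)) • Nb u + (rb u - Kb u) • B2b u)
    (hB2b : ∀ u, deriv B2b u = (-(rb u - Kb u)) • B1b u)
    (hKb : ∀ u, 0 < Kb u) (hkb : ∀ u, 0 < kb u)
    (honb : ∀ u, Orthonormal ℝ ![Tb u, Nb u, B1b u, B2b u])
    -- the generalized Mannheim correspondence
    (hrel : ∀ s, βc (ψ s) = α s + lam • N s)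
    (hspan : ∀ s, ∃ g h : ℝ, N s = g • B1b (ψ s) + h • B2b (ψ s)) :
    ∀ s, K s = lam * ((K s) ^ 2 + (k s) ^ 2) := by
  -- inner product facts from orthonormality
  have ip : ∀ t (i j : Fin 4),
      ⟪![T t, N t, B₁ t, B₂ t] i, ![T t, N t, B₁ t, B₂ t] j⟫ = if i = j then 1 else 0 :=
    fun t i j => orthonormal_iff_ite.mp (hon t) i j
  have ipb : ∀ v (i j : Fin 4),
      ⟪![Tb v, Nb v, B1b v, B2b v] i, ![Tb v, Nb v, B1b v, B2b v] j⟫ = if i = j then 1 else 0 :=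
    fun v i j => orthonormal_iff_ite.mp (honb v) i j
  have hTN : ∀ t, ⟪T t, N t⟫ = 0 := fun t => by simpa using ip t 0 1
  have hNT : ∀ t, ⟪N t, T t⟫ = 0 := fun t => by simpa using ip t 1 0
  have hTT : ∀ t, ⟪T t, T t⟫ = 1 := fun t => by simpa using ip t 0 0
  have hNN : ∀ t, ⟪N t, N t⟫ = 1 := fun t => by simpa using ip t 1 1
  have hBB : ∀ t, ⟪B₁ t, B₁ t⟫ = 1 := fun t => by simpa using ip t 2 2
  have hB1N : ∀ t, ⟪B₁ t, N t⟫ = 0 := fun t => by simpa using ip t 2 1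
  have hNB1 : ∀ t, ⟪N t, B₁ t⟫ = 0 := fun t => by simpa using ip t 1 2
  have hTB1 : ∀ t, ⟪T t, B₁ t⟫ = 0 := fun t => by simpa using ip t 0 2
  have hB1T : ∀ t, ⟪B₁ t, T t⟫ = 0 := fun t => by simpa using ip t 2 0
  have hbTB1 : ∀ v, ⟪Tb v, B1b v⟫ = 0 := fun v => by simpa using ipb v 0 2
  have hbTB2 : ∀ v, ⟪Tb v, B2b v⟫ = 0 := fun v => by simpa using ipb v 0 3
  have hbNB1 : ∀ v, ⟪Nb v, B1b v⟫ = 0 := fun v => by simpa using ipb v 1 2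
  have hbNB2 : ∀ v, ⟪Nb v, B2b v⟫ = 0 := fun v => by simpa using ipb v 1 3
  -- differentiability forced by nonzero derivatives
  have hforce : ∀ (f : ℝ → EuclideanSpace ℝ (Fin 4)) t, deriv f t ≠ 0 →
      DifferentiableAt ℝ f t := by
    intro f t h
    by_contra hc
    exact h (deriv_zero_of_not_differentiableAt hc)
  have hNd : ∀ t, DifferentiableAt ℝ N t := by
    intro t
    refine hforce N t ?_
    intro h
    have : ⟪deriv N t, B₁ t⟫ = k t := by
      rw [hN]
      simp [inner_add_left, inner_smul_left, hTB1, hBB]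
      rw [← real_inner_self_eq_norm_sq, hBB, mul_one]
    rw [h] at this
    simp at this
    exact (hk t).ne' this.symm
  have hTbd : ∀ v, DifferentiableAt ℝ Tb v := by
    intro v
    refine hforce Tb v ?_
    intro h
    have hNbNb : ⟪Nb v, Nb v⟫ = 1 := by simpa using ipb v 1 1
    have : ⟪deriv Tb v, Nb v⟫ = Kb v := by
      rw [hTb]; simp [inner_smul_left, hNbNb]
      rw [← real_inner_self_eq_norm_sq, hNbNb, mul_one]
    rw [h] at this
    simp at this
    exact (hKb v).ne' this.symm
  have hψd : ∀ t, DifferentiableAt ℝ ψ t := fun t => hψsm.differentiable (by simp) t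
  have hψ'd : ∀ t, DifferentiableAt ℝ (deriv ψ) t := by
    have h1 : ContDiff ℝ ((⊤ : ℕ∞) : WithTop ℕ∞) ψ := hψsm.of_le (by simp)
    exact fun t => ((contDiff_infty_iff_deriv.mp h1).2.differentiable (by simp)) t
  -- derivative of the Mannheim relation
  have hF : ∀ t, deriv ψ t • Tb (ψ t)
      = (1 - lam * K t) • T t + (lam * k t) • B₁ t := by
    intro t
    have h1 : HasDerivAt (βc ∘ ψ) (deriv ψ t • Tb (ψ t)) t := by
      have hb : HasDerivAt βc (Tb (ψ t)) (ψ t) := by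
        have := (hβsm.differentiable (by simp) (ψ t)).hasDerivAt
        rwa [hβ'] at this
      exact HasDerivAt.scomp t hb ((hψd t).hasDerivAt)
    have h2 : HasDerivAt (fun x => α x + lam • N x)
        (T t + lam • ((-(K t)) • T t + k t • B₁ t)) t := by
      have ha : HasDerivAt α (T t) t := by
        have := (hαsm.differentiable (by simp) t).hasDerivAt
        rwa [hα'] at this
      have hn : HasDerivAt N ((-(K t)) • T t + k t • B₁ t) t := by
        have := (hNd t).hasDerivAt
        rwa [hN] at this
      exact ha.add (hn.const_smul lam)
    have h1' : HasDerivAt (fun x => α x + lam • N x) (deriv ψ t • Tb (ψ t)) t := by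
      refine h1.congr_of_eventuallyEq (Filter.Eventually.of_forall fun x => ?_)
      simp [Function.comp, hrel x]
    have := h1'.unique h2
    rw [this]
    module
  intro s
  set u := ψ s with hu
  obtain ⟨g, h, hgh⟩ := hspan s
  -- second derivative computation
  have hF2 : HasDerivAt (fun t => deriv ψ t • Tb (ψ t))
      (deriv ψ s • (deriv ψ s • (Kb u • Nb u)) + deriv (deriv ψ) s • Tb u) s := by
    have hc : HasDerivAt (deriv ψ) (deriv (deriv ψ) s) s := (hψ'd s).hasDerivAt
    have htb : HasDerivAt (Tb ∘ ψ) (deriv ψ s • (Kb u • Nb u)) s := by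
      have h0 : HasDerivAt Tb (Kb u • Nb u) u := by
        have := (hTbd u).hasDerivAt
        rwa [hTb] at this
      exact HasDerivAt.scomp_of_eq s h0 ((hψd s).hasDerivAt) hu
    exact hc.smul htb
  -- the inner product function ⟪F t, N t⟫ is identically 0
  have hG0 : (fun t => ⟪deriv ψ t • Tb (ψ t), N t⟫) = fun _ => (0 : ℝ) := by
    funext t
    rw [hF t]
    simp [inner_add_left, inner_smul_left, hTN, hB1N]
  have hGd : HasDerivAt (fun t => ⟪deriv ψ t • Tb (ψ t), N t⟫)
      (⟪deriv ψ s • Tb u, (-(K s)) • T s + k s • B₁ s⟫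
        + ⟪deriv ψ s • (deriv ψ s • (Kb u • Nb u)) + deriv (deriv ψ) s • Tb u, N s⟫) s := by
    have hn : HasDerivAt N ((-(K s)) • T s + k s • B₁ s) s := by
      have := (hNd s).hasDerivAt
      rwa [hN] at this
    exact hF2.inner ℝ hn
  have hzero : HasDerivAt (fun t => ⟪deriv ψ t • Tb (ψ t), N t⟫) 0 s := by
    rw [hG0]; exact hasDerivAt_const s 0
  have heq := hGd.unique hzero
  -- the second term vanishes since N s ⟂ Tb u, Nb u
  have hTbN : ⟪Tb u, N s⟫ = 0 := by
    rw [hgh]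
    simp [inner_add_right, inner_smul_right, hbTB1, hbTB2, hu]
  have hNbN : ⟪Nb u, N s⟫ = 0 := by
    rw [hgh]
    simp [inner_add_right, inner_smul_right, hbNB1, hbNB2, hu]
  rw [hF s] at heq
  simp only [inner_add_left, inner_add_right, inner_smul_left, inner_smul_right,
    hTT, hBB, hTN, hTB1, hB1T, hB1N, hTbN, hNbN, conj_trivial] at heq
  -- heq should now be a polynomial identity
  nlinarith [heq, hk s, hK s]
end

section
/- Let α : I → ℝ⁴ be a unit-speed curve with Frenet frame (T, N, B₁, B₂) and non-constant curvatures K > 0 and k > 0 satisfying K(s) = λ(K(s)² + k(s)²) for all s, where λ is a nonzero constant. Define β(s̄) = α(s) + λ N(s) with s̄ the arc-length parameter of β. Then the second Frenet vector N(s) of α lies at each point in the plane spanned by the third and fourth Frenet vectors of β at the corresponding point; i.e., α is a generalized Mannheim curve with Mannheim partner β. -/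
open scoped RealInnerProductSpace

/-- Let α be a unit-speed curve in ℝ⁴ with Frenet frame (T, N, B₁, B₂) and
non-constant curvatures K > 0 and k > 0 satisfying K = λ(K² + k²) for a nonzero constant λ.
If β (given by its unit-speed parametrization βc, with Frenet frame (T̄, N̄, B̄₁, B̄₂) and
orientation-preserving reparametrization ψ) satisfies βc(ψ(s)) = α(s) + λ N(s), then N(s)
lies in the plane spanned by B̄₁ and B̄₂ at the corresponding point; i.e. α is a generalized
Mannheim curve with Mannheim partner β. -/
theorem mannheim4_curvature_relation_converse
    (α T N B₁ B₂ βc Tb Nb B1b B2b : ℝ → EuclideanSpace ℝ (Fin 4))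
    (K k r Kb kb rb : ℝ → ℝ) (ψ : ℝ → ℝ) (lam : ℝ)
    (hαsm : ContDiff ℝ (⊤ : ℕ∞) α) (hβsm : ContDiff ℝ (⊤ : ℕ∞) βc)
    (hψsm : ContDiff ℝ (⊤ : ℕ∞) ψ) (hlam : lam ≠ 0)
    -- Frenet apparatus of α
    (hα' : ∀ s, deriv α s = T s)
    (hT : ∀ s, deriv T s = K s • N s)
    (hN : ∀ s, deriv N s = (-(K s)) • T s + k s • B₁ s)
    (hB₁ : ∀ s, deriv B₁ s = (-(k s)) • N s + (r s - K s) • B₂ s)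
    (hB₂ : ∀ s, deriv B₂ s = (-(r s - K s)) • B₁ s)
    (hK : ∀ s, 0 < K s) (hk : ∀ s, 0 < k s)
    (hon : ∀ s, Orthonormal ℝ ![T s, N s, B₁ s, B₂ s])
    -- Frenet apparatus of the partner βc
    (hβ' : ∀ u, deriv βc u = Tb u)
    (hTb : ∀ u, deriv Tb u = Kb u • Nb u)
    (hNb : ∀ u, deriv Nb u = (-(Kb u)) • Tb u + kb u • B1b u)
    (hB1b : ∀ u, deriv B1b u = (-(kb u)) • Nb u + (rb u - Kb u) • B2b u)
    (hB2b : ∀ u, deriv B2b u = (-(rb u - Kb u)) • B1b u)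
    (hKb : ∀ u, 0 < Kb u) (hkb : ∀ u, 0 < kb u)
    (honb : ∀ u, Orthonormal ℝ ![Tb u, Nb u, B1b u, B2b u])
    -- K and k are non-constant and satisfy the curvature relation
    (hKnc : ¬ ∃ c : ℝ, ∀ s, K s = c) (hknc : ¬ ∃ c : ℝ, ∀ s, k s = c)
    (hrelK : ∀ s, K s = lam * ((K s) ^ 2 + (k s) ^ 2))
    -- βc ∘ ψ is the curve α + λN, with ψ the arc-length reparametrization
    (hψ' : ∀ s, 0 < deriv ψ s)
    (hrel : ∀ s, βc (ψ s) = α s + lam • N s) :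
    ∀ s, ∃ g h : ℝ, N s = g • B1b (ψ s) + h • B2b (ψ s) := by
  have hβdiff : Differentiable ℝ βc := hβsm.differentiable (by simp)
  have hαdiff : Differentiable ℝ α := hαsm.differentiable (by simp)
  have hψdiff : Differentiable ℝ ψ := hψsm.differentiable (by simp)
  have hψne : ∀ s, deriv ψ s ≠ 0 := fun s => (hψ' s).ne'
  have honα : ∀ s (i j : Fin 4),
      ⟪![T s, N s, B₁ s, B₂ s] i, ![T s, N s, B₁ s, B₂ s] j⟫
        = if i = j then 1 else 0 := fun s i j => orthonormal_iff_ite.mp (hon s) i j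
  have iTT : ∀ s, ⟪T s, T s⟫ = 1 := fun s => by simpa using honα s 0 0
  have iTB : ∀ s, ⟪T s, B₁ s⟫ = 0 := fun s => by simpa using honα s 0 2
  have iNT : ∀ s, ⟪N s, T s⟫ = 0 := fun s => by simpa using honα s 1 0
  have iNB : ∀ s, ⟪N s, B₁ s⟫ = 0 := fun s => by simpa using honα s 1 2
  have iBT : ∀ s, ⟪B₁ s, T s⟫ = 0 := fun s => by simpa using honα s 2 0
  have iBB : ∀ s, ⟪B₁ s, B₁ s⟫ = 1 := fun s => by simpa using honα s 2 2
  -- N is differentiable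
  have hNdiff : ∀ s, DifferentiableAt ℝ N s := by
    intro s
    by_contra h
    have h0 : deriv N s = 0 := deriv_zero_of_not_differentiableAt h
    rw [hN s] at h0
    have hzz : ⟪B₁ s, (-(K s)) • T s + k s • B₁ s⟫ = k s := by
      rw [inner_add_right, real_inner_smul_right, real_inner_smul_right, iBT s, iBB s]
      ring
    rw [h0] at hzz
    simp at hzz
    exact (hk s).ne' hzz.symm
  have hNder : ∀ s, HasDerivAt N ((-(K s)) • T s + k s • B₁ s) s := by
    intro s
    have := (hNdiff s).hasDerivAt
    rwa [hN s] at this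
  -- the key equation from differentiating βc ∘ ψ = α + lam • N
  have hE : ∀ s, deriv ψ s • Tb (ψ s)
      = T s + lam • ((-(K s)) • T s + k s • B₁ s) := by
    intro s
    have hb : HasDerivAt βc (Tb (ψ s)) (ψ s) := by
      have := (hβdiff (ψ s)).hasDerivAt
      rwa [hβ' (ψ s)] at this
    have h1 : HasDerivAt (fun t => βc (ψ t)) (deriv ψ s • Tb (ψ s)) s :=
      hb.scomp s (hψdiff s).hasDerivAt
    have ha : HasDerivAt α (T s) s := by
      have := (hαdiff s).hasDerivAt
      rwa [hα' s] at this
    have h2 : HasDerivAt (fun t => α t + lam • N t)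
        (T s + lam • ((-(K s)) • T s + k s • B₁ s)) s :=
      ha.add ((hNder s).const_smul lam)
    have hfe : (fun t => βc (ψ t)) = fun t => α t + lam • N t := funext hrel
    rw [hfe] at h1
    exact h1.unique h2
  -- inner products of the frame of α with Tb
  have iTTb : ∀ s, deriv ψ s * ⟪T s, Tb (ψ s)⟫ = 1 - lam * K s := by
    intro s
    have h := congrArg (fun v => ⟪T s, v⟫) (hE s)
    simp only [inner_add_right, real_inner_smul_right] at h
    rw [iTT s, iTB s] at h
    linarith
  have iBTb : ∀ s, deriv ψ s * ⟪B₁ s, Tb (ψ s)⟫ = lam * k s := by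
    intro s
    have h := congrArg (fun v => ⟪B₁ s, v⟫) (hE s)
    simp only [inner_add_right, real_inner_smul_right] at h
    rw [iBT s, iBB s] at h
    linarith
  have iNTb : ∀ s, ⟪N s, Tb (ψ s)⟫ = 0 := by
    intro s
    have h := congrArg (fun v => ⟪N s, v⟫) (hE s)
    simp only [inner_add_right, real_inner_smul_right] at h
    rw [iNT s, iNB s] at h
    have h' : deriv ψ s * ⟪N s, Tb (ψ s)⟫ = 0 := by linarith
    rcases mul_eq_zero.mp h' with h'' | h''
    · exact absurd h'' (hψne s)
    · exact h''
  -- inner product of N with Nb vanishes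
  have iNNb : ∀ s, ⟪N s, Nb (ψ s)⟫ = 0 := by
    intro s
    have hTbdiff : DifferentiableAt ℝ Tb (ψ s) := by
      by_contra h
      have h0 : deriv Tb (ψ s) = 0 := deriv_zero_of_not_differentiableAt h
      rw [hTb (ψ s)] at h0
      rcases smul_eq_zero.mp h0 with h1 | h1
      · exact (hKb (ψ s)).ne' h1
      · have hnb : ‖Nb (ψ s)‖ = 1 := by simpa using (honb (ψ s)).1 1
        rw [h1] at hnb
        simp at hnb
    have hb : HasDerivAt Tb (Kb (ψ s) • Nb (ψ s)) (ψ s) := by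
      have := hTbdiff.hasDerivAt
      rwa [hTb (ψ s)] at this
    have hTc : HasDerivAt (fun t => Tb (ψ t)) (deriv ψ s • (Kb (ψ s) • Nb (ψ s))) s :=
      hb.scomp s (hψdiff s).hasDerivAt
    have hF : HasDerivAt (fun t => ⟪N t, Tb (ψ t)⟫)
        (⟪N s, deriv ψ s • (Kb (ψ s) • Nb (ψ s))⟫
          + ⟪(-(K s)) • T s + k s • B₁ s, Tb (ψ s)⟫) s :=
      (hNder s).inner ℝ hTc
    have hF0 : (fun t => ⟪N t, Tb (ψ t)⟫) = fun _ => (0:ℝ) := funext fun t => iNTb t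
    have hzero : HasDerivAt (fun t => ⟪N t, Tb (ψ t)⟫) 0 s := by
      rw [hF0]; exact hasDerivAt_const s 0
    have heq := hF.unique hzero
    simp only [inner_add_left, real_inner_smul_left, real_inner_smul_right] at heq
    have hgoal : deriv ψ s * deriv ψ s * (Kb (ψ s) * ⟪N s, Nb (ψ s)⟫) = 0 := by
      linear_combination (deriv ψ s) * heq + (K s) * iTTb s - (k s) * iBTb s + hrelK s
    rcases mul_eq_zero.mp hgoal with h1 | h1
    · exact absurd h1 (mul_ne_zero (hψne s) (hψne s))
    · rcases mul_eq_zero.mp h1 with h2 | h2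
      · exact absurd h2 (hKb (ψ s)).ne'
      · exact h2
  -- expand N in the Frenet frame of β
  intro s
  have hv : LinearIndependent ℝ ![Tb (ψ s), Nb (ψ s), B1b (ψ s), B2b (ψ s)] :=
    (honb (ψ s)).linearIndependent
  have hspan : Submodule.span ℝ
      (Set.range ![Tb (ψ s), Nb (ψ s), B1b (ψ s), B2b (ψ s)]) = ⊤ :=
    hv.span_eq_top_of_card_eq_finrank (by simp [finrank_euclideanSpace_fin])
  have hmem : N s ∈ Submodule.span ℝ
      (Set.range ![Tb (ψ s), Nb (ψ s), B1b (ψ s), B2b (ψ s)]) := by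
    rw [hspan]; trivial
  obtain ⟨c, hc⟩ := (Submodule.mem_span_range_iff_exists_fun ℝ).mp hmem
  have hc0 : c 0 = 0 := by
    have e := (honb (ψ s)).inner_right_fintype c 0
    rw [hc] at e
    simp only [Matrix.cons_val_zero] at e
    rw [real_inner_comm, iNTb s] at e
    exact e.symm
  have hc1 : c 1 = 0 := by
    have e := (honb (ψ s)).inner_right_fintype c 1
    rw [hc] at e
    simp only [Matrix.cons_val_one, Matrix.head_cons, Matrix.cons_val_zero] at e
    rw [real_inner_comm, iNNb s] at e
    exact e.symm
  refine ⟨c 2, c 3, ?_⟩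
  rw [← hc]
  simp [Fin.sum_univ_four, hc0, hc1]
end

section
/- Let α, β be unit-speed curves in ℝ³ forming a Mannheim pair, with α(s*) = β(s*) + μ b*(s*) for a nonzero constant μ, where (t*, n*, b*) is the Frenet frame of β with curvature k* > 0 and torsion r*. Let θ(s*) be the angle between the tangents t and t* at corresponding points. Then dθ/ds* = −k*(s*) and μ r*(s*) = −tan θ(s*), and consequently ds/ds* = 1/cos θ where s is arc length along α. -/
open scoped RealInnerProductSpace

lemma orth3 {E : Type*} [NormedAddCommGroup E] [InnerProductSpace ℝ E]
    (v0 v1 v2 : E) (h : Orthonormal ℝ ![v0, v1, v2]) :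
    ⟪v0, v0⟫ = 1 ∧ ⟪v0, v1⟫ = 0 ∧ ⟪v0, v2⟫ = 0 ∧ ⟪v1, v1⟫ = 1 ∧ ⟪v1, v2⟫ = 0 ∧
      ⟪v2, v2⟫ = 1 ∧ ⟪v1, v0⟫ = 0 ∧ ⟪v2, v0⟫ = 0 ∧ ⟪v2, v1⟫ = 0 := by
  have h' := orthonormal_iff_ite.mp h
  refine ⟨?_, ?_, ?_, ?_, ?_, ?_, ?_, ?_, ?_⟩
  · simpa using h' 0 0
  · simpa using h' 0 1
  · simpa using h' 0 2
  · simpa using h' 1 1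
  · simpa using h' 1 2
  · simpa using h' 2 2
  · simpa using h' 1 0
  · simpa using h' 2 0
  · simpa using h' 2 1

/-- Let α, β be unit-speed curves in ℝ³ forming a Mannheim pair, with
α(φ(u)) = β(u) + μ b*(u) for a nonzero constant μ (φ the arc-length reparametrization of α),
and let θ(u) be the angle between the tangents t and t* at corresponding points, so that
t(φ(u)) = cos θ(u) t*(u) + sin θ(u) n*(u). Then dθ/ds* = −k*, μ r* = −tan θ, and
ds/ds* = dφ/du = 1/cos θ. -/
theorem mannheim3_angle_relations
    (αc t n b β tst nst bst : ℝ → EuclideanSpace ℝ (Fin 3))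
    (k r kst rst : ℝ → ℝ) (φ θ : ℝ → ℝ) (μ : ℝ)
    (hαsm : ContDiff ℝ (⊤ : ℕ∞) αc) (hβsm : ContDiff ℝ (⊤ : ℕ∞) β)
    (hφsm : ContDiff ℝ (⊤ : ℕ∞) φ) (hθsm : ContDiff ℝ (⊤ : ℕ∞) θ) (hμ : μ ≠ 0)
    -- α is unit speed with Frenet frame (t, n, b)
    (hα' : ∀ s, deriv αc s = t s)
    (ht : ∀ s, deriv t s = k s • n s)
    (hn : ∀ s, deriv n s = (-(k s)) • t s + r s • b s)
    (hb : ∀ s, deriv b s = (-(r s)) • n s)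
    (hk : ∀ s, 0 < k s)
    (hon : ∀ s, Orthonormal ℝ ![t s, n s, b s])
    -- β is unit speed with Frenet frame (t*, n*, b*)
    (hβ' : ∀ u, deriv β u = tst u)
    (htst : ∀ u, deriv tst u = kst u • nst u)
    (hnst : ∀ u, deriv nst u = (-(kst u)) • tst u + rst u • bst u)
    (hbst : ∀ u, deriv bst u = (-(rst u)) • nst u)
    (hkst : ∀ u, 0 < kst u)
    (honβ : ∀ u, Orthonormal ℝ ![tst u, nst u, bst u])
    -- Mannheim correspondence
    (hrel : ∀ u, αc (φ u) = β u + μ • bst u)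
    (hpar : ∀ u, ∃ c : ℝ, n (φ u) = c • bst u)
    -- θ is the angle between the tangents at corresponding points
    (hangle : ∀ u, t (φ u) = Real.cos (θ u) • tst u + Real.sin (θ u) • nst u) :
    ∀ u, deriv θ u = -(kst u) ∧ μ * rst u = -Real.tan (θ u) ∧
      deriv φ u = 1 / Real.cos (θ u) := by
  -- smoothness facts
  have htfun : t = deriv αc := funext fun s => (hα' s).symm
  have htsm : ContDiff ℝ ((⊤ : ℕ∞) : WithTop ℕ∞) t := by
    rw [htfun]; exact (contDiff_infty_iff_deriv.mp (hαsm.of_le (by simp))).2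
  have htstfun : tst = deriv β := funext fun u => (hβ' u).symm
  have htstsm : ContDiff ℝ ((⊤ : ℕ∞) : WithTop ℕ∞) tst := by
    rw [htstfun]; exact (contDiff_infty_iff_deriv.mp (hβsm.of_le (by simp))).2
  have hbstd : Differentiable ℝ bst := by
    have hb' : bst = fun u => μ⁻¹ • (αc (φ u) - β u) := by
      funext u
      rw [hrel u, add_sub_cancel_left, inv_smul_smul₀ hμ]
    rw [hb']
    exact (((hαsm.differentiable (by simp)).comp (hφsm.differentiable (by simp))).sub
      (hβsm.differentiable (by simp))).const_smul μ⁻¹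
  intro u
  obtain ⟨hTT, hTN, hTB, hNN, hNB, hBB, hNT, hBT, hBN⟩ :=
    orth3 (tst u) (nst u) (bst u) (honβ u)
  obtain ⟨c, hc⟩ := hpar u
  -- nst is differentiable at u
  have hnstd : DifferentiableAt ℝ nst u := by
    by_contra hcon
    have h0 := deriv_zero_of_not_differentiableAt hcon
    rw [hnst u] at h0
    have := congrArg (fun x => (inner ℝ (tst u) x : ℝ)) h0
    simp only [inner_add_right, inner_smul_right, hTT, hTN, hTB, hNT, hBT, inner_zero_right,
      mul_one, mul_zero, add_zero] at this
    have := hkst u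
    linarith
  -- derivative facts
  have hφD : HasDerivAt φ (deriv φ u) u := ((hφsm.differentiable (by simp)) u).hasDerivAt
  have hθD : HasDerivAt θ (deriv θ u) u := ((hθsm.differentiable (by simp)) u).hasDerivAt
  have hαD : HasDerivAt αc (t (φ u)) (φ u) := by
    have := ((hαsm.differentiable (by simp)) (φ u)).hasDerivAt
    rwa [hα'] at this
  have hβD : HasDerivAt β (tst u) u := by
    have := ((hβsm.differentiable (by simp)) u).hasDerivAt
    rwa [hβ'] at this
  have hbstD : HasDerivAt bst ((-(rst u)) • nst u) u := by
    have := (hbstd u).hasDerivAt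
    rwa [hbst u] at this
  have hnstD : HasDerivAt nst ((-(kst u)) • tst u + rst u • bst u) u := by
    have := hnstd.hasDerivAt
    rwa [hnst u] at this
  have htstD : HasDerivAt tst (kst u • nst u) u := by
    have := ((htstsm.differentiable (by norm_num)) u).hasDerivAt
    rwa [htst u] at this
  have htD : HasDerivAt t (k (φ u) • n (φ u)) (φ u) := by
    have := ((htsm.differentiable (by norm_num)) (φ u)).hasDerivAt
    rwa [ht (φ u)] at this
  -- Equation 1: differentiate the Mannheim relation
  have hD1 : HasDerivAt (fun x => αc (φ x)) (deriv φ u • t (φ u)) u := hαD.scomp u hφD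
  have hD2 : HasDerivAt (fun x => β x + μ • bst x) (tst u + μ • ((-(rst u)) • nst u)) u :=
    hβD.add (hbstD.const_smul μ)
  have key1 : deriv φ u • t (φ u) = tst u + μ • ((-(rst u)) • nst u) := by
    have heq : (fun x => αc (φ x)) = fun x => β x + μ • bst x := funext hrel
    rw [heq] at hD1
    exact hD1.unique hD2
  rw [hangle u] at key1
  have eq1 : deriv φ u * Real.cos (θ u) = 1 := by
    have := congrArg (fun x => (inner ℝ (tst u) x : ℝ)) key1
    simp only [inner_add_right, inner_smul_right, hTT, hTN, hTB, hNT, hBT,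
      mul_one, mul_zero, add_zero, zero_add] at this
    linarith
  have eq2 : deriv φ u * Real.sin (θ u) = -(μ * rst u) := by
    have := congrArg (fun x => (inner ℝ (nst u) x : ℝ)) key1
    simp only [inner_add_right, inner_smul_right, hNN, hTN, hNB, hNT, hBN,
      mul_one, mul_zero, add_zero, zero_add] at this
    linarith
  -- Equation 2: differentiate the angle relation
  have hD3 : HasDerivAt (fun x => t (φ x)) (deriv φ u • (k (φ u) • n (φ u))) u := htD.scomp u hφD
  have hcosD : HasDerivAt (fun x => Real.cos (θ x)) (-Real.sin (θ u) * deriv θ u) u := hθD.cos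
  have hsinD : HasDerivAt (fun x => Real.sin (θ x)) (Real.cos (θ u) * deriv θ u) u := hθD.sin
  have hD4 : HasDerivAt (fun x => Real.cos (θ x) • tst x + Real.sin (θ x) • nst x)
      ((Real.cos (θ u) • (kst u • nst u) + (-Real.sin (θ u) * deriv θ u) • tst u) +
        (Real.sin (θ u) • ((-(kst u)) • tst u + rst u • bst u) +
          (Real.cos (θ u) * deriv θ u) • nst u)) u :=
    (hcosD.smul htstD).add (hsinD.smul hnstD)
  have key2 : deriv φ u • (k (φ u) • n (φ u)) =
      (Real.cos (θ u) • (kst u • nst u) + (-Real.sin (θ u) * deriv θ u) • tst u) +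
        (Real.sin (θ u) • ((-(kst u)) • tst u + rst u • bst u) +
          (Real.cos (θ u) * deriv θ u) • nst u) := by
    have heq : (fun x => t (φ x)) = fun x => Real.cos (θ x) • tst x + Real.sin (θ x) • nst x :=
      funext hangle
    rw [heq] at hD3
    exact hD3.unique hD4
  rw [hc] at key2
  have eT : Real.sin (θ u) * (deriv θ u + kst u) = 0 := by
    have := congrArg (fun x => (inner ℝ (tst u) x : ℝ)) key2
    simp only [inner_add_right, inner_smul_right, hTT, hTN, hTB, hNT, hBT,
      mul_one, mul_zero, add_zero, zero_add] at this
    linear_combination this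
  have eN : Real.cos (θ u) * (deriv θ u + kst u) = 0 := by
    have := congrArg (fun x => (inner ℝ (nst u) x : ℝ)) key2
    simp only [inner_add_right, inner_smul_right, hNN, hTN, hNB, hNT, hBN,
      mul_one, mul_zero, add_zero, zero_add] at this
    linear_combination -this
  have hpyth := Real.sin_sq_add_cos_sq (θ u)
  have hθ' : deriv θ u = -(kst u) := by
    linear_combination Real.sin (θ u) * eT + Real.cos (θ u) * eN -
      (deriv θ u + kst u) * hpyth
  have hcos_ne : Real.cos (θ u) ≠ 0 := by
    intro h
    rw [h, mul_zero] at eq1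
    exact one_ne_zero eq1.symm
  have hφ' : deriv φ u = 1 / Real.cos (θ u) := by
    rw [eq_div_iff hcos_ne]
    exact eq1
  refine ⟨hθ', ?_, hφ'⟩
  rw [Real.tan_eq_sin_div_cos]
  rw [hφ'] at eq2
  field_simp at eq2 ⊢
  linarith
end

section
/- Let β : I → ℝ³ be a unit-speed curve with curvature k* > 0 and torsion r* satisfying μ dr*/ds* = k*(1 + μ²(r*)²) for a nonzero constant μ, and let α(s*) = β(s*) + μ b*(s*). Then the vector (α' × α'') × α' is a negative multiple of b*(s*) at every point where r* ≠ 0; explicitly, (α' × α'') × α' = −μ(r*)²(1 + μ²(r*)²) b*. -/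
open scoped RealInnerProductSpace
open scoped ContDiff

/-- Vector triple product identity for `cross3`. -/
lemma cross3_triple (a b c : EuclideanSpace ℝ (Fin 3)) :
    cross3 (cross3 a b) c = ⟪a, c⟫ • b - ⟪b, c⟫ • a := by
  ext i
  fin_cases i <;>
    simp [cross3, PiLp.inner_apply, Fin.sum_univ_three, RCLike.inner_apply, PiLp.sub_apply,
      PiLp.smul_apply, smul_eq_mul] <;> ring

/-- Let β be a unit-speed curve in ℝ³ with curvature k* > 0 and torsion r*
satisfying μ dr*/ds* = k*(1 + μ²(r*)²) for a nonzero constant μ, and α(s*) = β(s*) + μ b*(s*).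
Then (α' × α'') × α' = −μ(r*)²(1 + μ²(r*)²) b*, a nonzero multiple of b* wherever r* ≠ 0. -/
theorem mannheim3_principal_normal_formula
    (β tst nst bst α : ℝ → EuclideanSpace ℝ (Fin 3))
    (kst rst : ℝ → ℝ) (μ : ℝ)
    (hβsm : ContDiff ℝ (⊤ : ℕ∞) β) (hkstsm : ContDiff ℝ (⊤ : ℕ∞) kst) (hrstsm : ContDiff ℝ (⊤ : ℕ∞) rst)
    (hμ : μ ≠ 0)
    (hβ' : ∀ u, deriv β u = tst u)
    (htst : ∀ u, deriv tst u = kst u • nst u)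
    (hnst : ∀ u, deriv nst u = (-(kst u)) • tst u + rst u • bst u)
    (hbst : ∀ u, deriv bst u = (-(rst u)) • nst u)
    (hkst : ∀ u, 0 < kst u)
    (hon : ∀ u, Orthonormal ℝ ![tst u, nst u, bst u])
    (hode : ∀ u, μ * deriv rst u = kst u * (1 + μ ^ 2 * (rst u) ^ 2))
    (hαdef : ∀ u, α u = β u + μ • bst u) :
    ∀ u, cross3 (cross3 (deriv α u) (deriv (deriv α) u)) (deriv α u)
        = (-(μ * (rst u) ^ 2 * (1 + μ ^ 2 * (rst u) ^ 2))) • bst u ∧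
      (rst u ≠ 0 → -(μ * (rst u) ^ 2 * (1 + μ ^ 2 * (rst u) ^ 2)) ≠ 0) := by
  -- basic smoothness facts
  have hαfun : α = fun w => β w + μ • bst w := funext hαdef
  have htfun : tst = deriv β := funext fun w => (hβ' w).symm
  have hβsm' : ContDiff ℝ ∞ β := hβsm.of_le (by simp)
  have hrsm' : ContDiff ℝ ∞ rst := hrstsm.of_le (by simp)
  have htsm : ContDiff ℝ ∞ tst := by
    rw [htfun]; exact (contDiff_infty_iff_deriv.mp hβsm').2
  have h1le : (∞ : WithTop ℕ∞) ≠ 0 := by simp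
  have hβdiff : Differentiable ℝ β := hβsm'.differentiable h1le
  have hnfun : nst = fun w => (kst w)⁻¹ • deriv tst w := by
    funext w
    rw [htst w, smul_smul, inv_mul_cancel₀ (hkst w).ne', one_smul]
  have hnsm : ContDiff ℝ ∞ nst := by
    rw [hnfun]
    exact ((hkstsm.of_le (by simp)).inv fun w => (hkst w).ne').smul
      (contDiff_infty_iff_deriv.mp htsm).2
  intro u
  refine ⟨?_, ?_⟩
  · -- orthonormality data at u
    have htt : ⟪tst u, tst u⟫ = 1 := by
      have := (hon u).1 0
      simp only [Matrix.cons_val_zero] at this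
      rw [real_inner_self_eq_norm_mul_norm, this, one_mul]
    have hnn : ⟪nst u, nst u⟫ = 1 := by
      have := (hon u).1 1
      simp only [Matrix.cons_val_one, Matrix.head_cons, Matrix.cons_val_zero] at this
      rw [real_inner_self_eq_norm_mul_norm, this, one_mul]
    have hbb : ⟪bst u, bst u⟫ = 1 := by
      have := (hon u).1 2
      simp only [Matrix.cons_val_two, Matrix.tail_cons, Matrix.head_cons] at this
      rw [real_inner_self_eq_norm_mul_norm, this, one_mul]
    have htn : ⟪tst u, nst u⟫ = 0 := by
      have := (hon u).2 (show (0 : Fin 3) ≠ 1 by decide)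
      simpa using this
    have htb : ⟪tst u, bst u⟫ = 0 := by
      have := (hon u).2 (show (0 : Fin 3) ≠ 2 by decide)
      simpa using this
    have hnb : ⟪nst u, bst u⟫ = 0 := by
      have := (hon u).2 (show (1 : Fin 3) ≠ 2 by decide)
      simpa using this
    have hnt : ⟪nst u, tst u⟫ = 0 := by rw [real_inner_comm]; exact htn
    have hbt : ⟪bst u, tst u⟫ = 0 := by rw [real_inner_comm]; exact htb
    have hbn : ⟪bst u, nst u⟫ = 0 := by rw [real_inner_comm]; exact hnb
    -- key: if bst is differentiable on a nbhd of u, compute everything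
    have key : (∀ᶠ w in nhds u, DifferentiableAt ℝ bst w) →
        cross3 (cross3 (deriv α u) (deriv (deriv α) u)) (deriv α u)
          = (-(μ * (rst u) ^ 2 * (1 + μ ^ 2 * (rst u) ^ 2))) • bst u := by
      intro hb
      have hd1 : deriv α =ᶠ[nhds u] fun w => tst w - (μ * rst w) • nst w := by
        filter_upwards [hb] with w hbw
        rw [hαfun]
        rw [deriv_fun_add (g := fun y => μ • bst y) (hβdiff w) (hbw.const_smul μ), deriv_fun_const_smul μ hbw,
          hβ' w, hbst w, smul_smul]
        module
      have hαu : deriv α u = tst u - (μ * rst u) • nst u := hd1.self_of_nhds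
      have hα'' : deriv (deriv α) u
          = deriv (fun w => tst w - (μ * rst w) • nst w) u := hd1.deriv_eq
      have hdiff2 : DifferentiableAt ℝ (fun w => (μ * rst w) • nst w) u :=
        (((hrsm'.differentiable h1le) u).const_mul μ).smul ((hnsm.differentiable h1le) u)
      have hα''2 : deriv (deriv α) u
          = kst u • nst u -
            ((μ * rst u) • ((-(kst u)) • tst u + rst u • bst u) + (μ * deriv rst u) • nst u) := by
        rw [hα'', deriv_fun_sub ((htsm.differentiable h1le) u) hdiff2, htst u,
          deriv_fun_smul (((hrsm'.differentiable h1le) u).const_mul μ)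
            ((hnsm.differentiable h1le) u),
          hnst u, deriv_const_mul μ ((hrsm'.differentiable h1le) u)]
      have hC : deriv (deriv α) u
          = (μ * rst u * kst u) • tst u + (-(kst u * μ ^ 2 * rst u ^ 2)) • nst u
            + (-(μ * rst u ^ 2)) • bst u := by
        rw [hα''2, hode u]
        module
      rw [cross3_triple, hαu, hC]
      have e1 : ⟪tst u - (μ * rst u) • nst u, tst u - (μ * rst u) • nst u⟫
          = 1 + μ ^ 2 * rst u ^ 2 := by
        simp [-inner_self_eq_norm_sq_to_K, inner_sub_left, inner_sub_right, inner_smul_left, inner_smul_right,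
          htt, hnn, htn, hnt]
        ring
      have e2 : ⟪(μ * rst u * kst u) • tst u + (-(kst u * μ ^ 2 * rst u ^ 2)) • nst u
            + (-(μ * rst u ^ 2)) • bst u, tst u - (μ * rst u) • nst u⟫
          = μ * rst u * kst u + kst u * μ ^ 2 * rst u ^ 2 * (μ * rst u) := by
        simp [-inner_self_eq_norm_sq_to_K, inner_add_left, inner_sub_right, inner_smul_left, inner_smul_right,
          htt, hnn, hbb, htn, hnt, htb, hbt, hnb, hbn]
        ring
      rw [e1, e2]
      module
    -- main case analysis
    rcases eq_or_ne (rst u) 0 with hr | hr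
    · -- r u = 0
      by_cases hbu : DifferentiableAt ℝ bst u
      · -- isolated zero of rst
        have hrd : DifferentiableAt ℝ rst u := (hrsm'.differentiable h1le) u
        have hrderiv : deriv rst u ≠ 0 := by
          intro h
          have := hode u
          rw [h, hr] at this
          simp at this
          nlinarith [hkst u]
        have hb : ∀ᶠ w in nhds u, DifferentiableAt ℝ bst w := by
          have hslope : Filter.Tendsto (slope rst u) (nhdsWithin u {u}ᶜ)
              (nhds (deriv rst u)) :=
            (hasDerivAt_iff_tendsto_slope.mp hrd.hasDerivAt)
          have hne : ∀ᶠ w in nhdsWithin u {u}ᶜ, slope rst u w ≠ 0 :=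
            hslope.eventually_ne hrderiv
          have hrz : ∀ᶠ w in nhdsWithin u {u}ᶜ, rst w ≠ 0 := by
            filter_upwards [hne] with w hw
            intro h
            apply hw
            simp [slope, hr, h]
          have h2 : ∀ᶠ w in nhds u, w ∈ ({u}ᶜ : Set ℝ) → DifferentiableAt ℝ bst w := by
            rw [← eventually_nhdsWithin_iff]
            filter_upwards [hrz] with w hw
            apply differentiableAt_of_deriv_ne_zero
            rw [hbst w]
            simp only [ne_eq, smul_eq_zero, neg_eq_zero, not_or]
            refine ⟨hw, ?_⟩
            intro h
            have := (hon w).1 1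
            simp only [Matrix.cons_val_one, Matrix.head_cons] at this
            rw [h] at this; simp at this
          filter_upwards [h2] with w hw
          rcases eq_or_ne w u with rfl | h
          · exact hbu
          · exact hw h
        exact key hb
      · -- bst not differentiable at u : deriv α u = 0 (junk value)
        have hα0 : deriv α u = 0 := by
          apply deriv_zero_of_not_differentiableAt
          intro h
          apply hbu
          have hbfun : bst = fun w => μ⁻¹ • (α w - β w) := by
            funext w
            rw [hαdef w]
            simp [smul_smul, inv_mul_cancel₀ hμ]
          rw [hbfun]
          exact ((h.sub (hβdiff u)).const_smul μ⁻¹)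
        rw [hα0, cross3_triple, hr]
        simp
    · -- r u ≠ 0 : bst differentiable on the nbhd {rst ≠ 0}
      have hb : ∀ᶠ w in nhds u, DifferentiableAt ℝ bst w := by
        have hrc : ∀ᶠ w in nhds u, rst w ≠ 0 :=
          ((hrsm'.continuous).continuousAt).eventually_ne hr
        filter_upwards [hrc] with w hw
        apply differentiableAt_of_deriv_ne_zero
        rw [hbst w]
        simp only [ne_eq, smul_eq_zero, neg_eq_zero, not_or]
        refine ⟨hw, ?_⟩
        intro h
        have := (hon w).1 1
        simp only [Matrix.cons_val_one, Matrix.head_cons] at this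
        rw [h] at this; simp at this
      exact key hb
  · intro hr
    have h1 : (0:ℝ) < 1 + μ ^ 2 * rst u ^ 2 := by positivity
    intro h
    rw [neg_eq_zero] at h
    rcases mul_eq_zero.mp h with h | h
    · rcases mul_eq_zero.mp h with h | h
      · exact hμ h
      · exact hr (pow_eq_zero_iff (by norm_num) |>.mp h)
    · linarith
end
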